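/- In a bispanning graph with |V| ≥ 3, each pair of disjoint spanning trees admits at least four unique symmetric edge exchanges (the unique exchange graph has minimum degree at least 4). -/

import Mathlib

namespace MG

variable {V E : Type*}

/-- Two vertices are joined by an edge of `F`. -/
def Adj (ends : E → Sym2 V) (F : Set E) (u v : V) : Prop :=
  ∃ e ∈ F, ends e = s(u, v)

/-- Reachability using edges of `F`. -/
def Reach (ends : E → Sym2 V) (F : Set E) : V → V → Prop :=
  Relation.ReflTransGen (Adj ends F)

/-- The edge set `F` connects all vertices of the multigraph. -/
def Conn (ends : E → Sym2 V) (F : Set E) : Prop :=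
  ∀ u v : V, Reach ends F u v

/-- `F` is a spanning tree: it connects all vertices using exactly `|V| - 1` edges. -/
def IsSpanningTree (ends : E → Sym2 V) (F : Set E) : Prop :=
  Conn ends F ∧ Nat.card F = Nat.card V - 1

/-- The multigraph is bispanning: its edge set is the disjoint union of two spanning trees. -/
def Bispanning (ends : E → Sym2 V) : Prop :=
  ∃ S T : Set E, S ∪ T = Set.univ ∧ Disjoint S T ∧
    IsSpanningTree ends S ∧ IsSpanningTree ends T

/-- Degree of a vertex: number of incident edges. -/
noncomputable def deg (ends : E → Sym2 V) (v : V) : ℕ :=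
  Nat.card {e : E | v ∈ ends e}

/-- `C` is (the edge set of) a simple cycle: nonempty, connected, and every
incident vertex is incident to exactly two edges of `C`. -/
def IsCycle (ends : E → Sym2 V) (C : Set E) : Prop :=
  C.Nonempty ∧
  (∀ u v : V, (∃ e ∈ C, u ∈ ends e) → (∃ e ∈ C, v ∈ ends e) → Reach ends C u v) ∧
  (∀ v : V, (∃ e ∈ C, v ∈ ends e) → Nat.card {e : E | e ∈ C ∧ v ∈ ends e} = 2)

/-- Number of connected components when only edges of `F` are used. -/
noncomputable def numComp (ends : E → Sym2 V) (F : Set E) : ℕ :=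
  Nat.card (Quot (Reach ends F))

/-- `D` is an edge cut: removing it increases the number of components. -/
def IsEdgeCut (ends : E → Sym2 V) (D : Set E) : Prop :=
  numComp ends Set.univ < numComp ends Dᶜ

/-- A minimal edge cut: no proper subset is an edge cut. -/
def IsMinEdgeCut (ends : E → Sym2 V) (D : Set E) : Prop :=
  IsEdgeCut ends D ∧ ∀ D' : Set E, D' ⊂ D → ¬ IsEdgeCut ends D'

/-- `D` is the fundamental cut of the tree edge `e` of the spanning tree `F`:
the minimal edge cut contained in `(E \ F) + e`, which contains `e`. -/
def IsFundCut (ends : E → Sym2 V) (F : Set E) (e : E) (D : Set E) : Prop :=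
  D ⊆ insert e Fᶜ ∧ e ∈ D ∧ IsMinEdgeCut ends D

/-- `C` is the fundamental cycle of the non-tree edge `e` w.r.t. the spanning tree `F`:
the cycle contained in `F + e`, which contains `e`. -/
def IsFundCycle (ends : E → Sym2 V) (F : Set E) (e : E) (C : Set E) : Prop :=
  C ⊆ insert e F ∧ e ∈ C ∧ IsCycle ends C

end MG

/-!
If `e` is the leaf edge of the spanning tree `S` at a leaf `v`, the star of `v` is the
fundamental cut of `e`, and it meets the fundamental cycle of `e` in `T` exactly in the two cycle
edges at `v`, namely `e` and some `f ∈ T`; so `(e, f)` is a unique exchange. A tree on at least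
three vertices has two leaves with distinct leaf edges, so the leaf edges of `S` and of `T` give
four exchanges with pairwise distinct first edges.
-/

namespace MG

variable {V E : Type*} {ends : E → Sym2 V} {F F' : Set E} {u v w : V}

theorem Adj.symm (h : Adj ends F u v) : Adj ends F v u :=
  let ⟨e, he, hends⟩ := h
  ⟨e, he, hends.trans Sym2.eq_swap⟩

instance : Std.Symm (Adj ends F) := ⟨fun _ _ => Adj.symm⟩

theorem Reach.mono (hFF : F ⊆ F') (h : Reach ends F u v) : Reach ends F' u v :=
  Relation.ReflTransGen.mono (fun _ _ ⟨e, he, hends⟩ => ⟨e, hFF he, hends⟩) _ _ h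

theorem Reach.symm (h : Reach ends F u v) : Reach ends F v u :=
  Relation.ReflTransGen.stdSymm.symm _ _ h

theorem reach_equivalence : Equivalence (Reach ends F) :=
  ⟨fun _ => .refl, Reach.symm, .trans⟩

theorem Conn.mono (hFF : F ⊆ F') (h : Conn ends F) : Conn ends F' :=
  fun u v => (h u v).mono hFF

theorem Conn.numComp_eq_one [Nonempty V] (h : Conn ends F) : numComp ends F = 1 := by
  rw [numComp, Nat.card_eq_one_iff_unique]
  refine ⟨⟨fun a b => ?_⟩, ⟨Quot.mk _ (Classical.arbitrary V)⟩⟩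
  induction a using Quot.ind
  induction b using Quot.ind
  exact Quot.sound (h _ _)

theorem Reach.eq_of_forall_not_mem (hv : ∀ g ∈ F, v ∉ ends g) (h : Reach ends F v w) :
    w = v := by
  induction h with
  | refl => rfl
  | tail _ hadj ih =>
    subst ih
    obtain ⟨g, hg, hends⟩ := hadj
    exact absurd (hends ▸ Sym2.mem_mk_left _ _) (hv g hg)

inductive Walk (ends : E → Sym2 V) (F : Set E) : V → V → List V → List E → Prop
  | nil (u : V) : Walk ends F u u [u] []
  | cons {u w v : V} {g : E} {vs : List V} {es : List E} (hg : g ∈ F)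
      (hends : ends g = s(u, w)) (hw : Walk ends F w v vs es) :
      Walk ends F u v (u :: vs) (g :: es)

namespace Walk

variable {vs : List V} {es : List E}

theorem start_mem (h : Walk ends F u v vs es) : u ∈ vs := by
  cases h <;> exact List.mem_cons_self

theorem end_mem (h : Walk ends F u v vs es) : v ∈ vs := by
  induction h with
  | nil => exact List.mem_singleton_self _
  | cons _ _ _ ih => exact List.mem_cons_of_mem _ ih

theorem mem_of_mem_edges (h : Walk ends F u v vs es) {g : E} (hg : g ∈ es) : g ∈ F := by
  induction h with
  | nil => simp at hg
  | cons hg' _ _ ih =>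
    rcases List.mem_cons.mp hg with rfl | hg
    exacts [hg', ih hg]

theorem mem_of_mem_ends (h : Walk ends F u v vs es) {g : E} (hg : g ∈ es) {z : V}
    (hz : z ∈ ends g) : z ∈ vs := by
  induction h with
  | nil => simp at hg
  | cons _ hends hw ih =>
    rcases List.mem_cons.mp hg with rfl | hg
    · rw [hends, Sym2.mem_iff] at hz
      rcases hz with rfl | rfl
      exacts [List.mem_cons_self, List.mem_cons_of_mem _ hw.start_mem]
    · exact List.mem_cons_of_mem _ (ih hg)

theorem reach (h : Walk ends F u v vs es) (hw : w ∈ vs) : Reach ends {g | g ∈ es} u w := by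
  induction h with
  | nil => rw [List.mem_singleton.mp hw]; exact .refl
  | cons _ hends _ ih =>
    rcases List.mem_cons.mp hw with rfl | hw
    · exact .refl
    · exact .head ⟨_, List.mem_cons_self, hends⟩ ((ih hw).mono fun _ => List.mem_cons_of_mem _)

theorem exists_suffix (h : Walk ends F u v vs es) (hw : w ∈ vs) :
    ∃ vs' es', Walk ends F w v vs' es' ∧ vs' <:+ vs := by
  induction h with
  | nil =>
    obtain rfl := List.mem_singleton.mp hw
    exact ⟨_, _, .nil _, List.suffix_refl _⟩
  | cons hg hends hwalk ih =>
    rcases List.mem_cons.mp hw with rfl | hw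
    · exact ⟨_, _, .cons hg hends hwalk, List.suffix_refl _⟩
    · obtain ⟨vs', es', h', hsuf⟩ := ih hw
      exact ⟨vs', es', h', hsuf.trans (List.suffix_cons _ _)⟩

theorem edges_nodup (h : Walk ends F u v vs es) (hnd : vs.Nodup) : es.Nodup := by
  induction h with
  | nil => exact List.nodup_nil
  | cons _ hends hw ih =>
    rw [List.nodup_cons] at hnd ⊢
    refine ⟨fun hg => hnd.1 (hw.mem_of_mem_ends hg ?_), ih hnd.2⟩
    rw [hends]
    exact Sym2.mem_mk_left _ _

/-- On a path, an interior vertex lies on two edges and an end vertex on one. -/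
theorem countP_add_ite_add_ite [DecidableEq V] (h : Walk ends F u v vs es) (hnd : vs.Nodup)
    (w : V) :
    es.countP (fun g => w ∈ ends g) + (if w = u then 1 else 0) + (if w = v then 1 else 0) =
      if w ∈ vs then 2 else 0 := by
  induction h with
  | nil x => by_cases hw : w = x <;> simp [hw]
  | @cons x y v g vs es _ hends hw ih =>
    rw [List.nodup_cons] at hnd
    by_cases hwx : w = x
    · subst hwx
      have hwv : w ≠ v := fun h => hnd.1 (h ▸ hw.end_mem)
      have hes : es.countP (fun g => w ∈ ends g) = 0 := List.countP_eq_zero.mpr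
        fun g hg hwg => hnd.1 (hw.mem_of_mem_ends hg (of_decide_eq_true hwg))
      simp [hes, hends, hwv]
    · have := ih hnd.2
      by_cases hwy : w = y <;> simp_all

end Walk

theorem exists_walk_nodup_of_reach (h : Reach ends F u v) :
    ∃ vs es, Walk ends F u v vs es ∧ vs.Nodup := by
  induction h using Relation.ReflTransGen.head_induction_on with
  | refl => exact ⟨[v], [], .nil v, List.nodup_singleton v⟩
  | @head u c hadj _ ih =>
    obtain ⟨g, hg, hends⟩ := hadj
    obtain ⟨vs, es, hw, hnd⟩ := ih
    by_cases hu : u ∈ vs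
    · obtain ⟨vs', es', hw', hsuf⟩ := hw.exists_suffix hu
      exact ⟨vs', es', hw', hnd.sublist hsuf.sublist⟩
    · exact ⟨_, _, .cons hg hends hw, List.nodup_cons.mpr ⟨hu, hnd⟩⟩

theorem _root_.List.natCard_setOf_mem_and {α : Type*} {l : List α} (hl : l.Nodup)
    (p : α → Prop) [DecidablePred p] :
    Nat.card {a | a ∈ l ∧ p a} = l.countP (fun a => p a) := by
  classical
  have : {a | a ∈ l ∧ p a} = ↑(l.filter (fun a => p a)).toFinset := by ext; simp
  rw [this, Nat.card_coe_set_eq, Set.ncard_coe_finset, List.toFinset_card_of_nodup (hl.filter _),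
    List.countP_eq_length_filter]

/-- The fundamental cycle is `e` followed by a path of `T` between its ends. -/
theorem exists_isFundCycle {T : Set E} {e : E} (hT : Conn ends T) (he : ¬(ends e).IsDiag)
    (heT : e ∉ T) : ∃ C, IsFundCycle ends T e C := by
  classical
  obtain ⟨x, y, hxy⟩ : ∃ x y, ends e = s(x, y) := Sym2.inductionOn (ends e) fun x y => ⟨x, y, rfl⟩
  have hne : x ≠ y := by rintro rfl; exact he (hxy ▸ Sym2.mk_isDiag_iff.mpr rfl)
  obtain ⟨vs, es, hw, hnd⟩ := exists_walk_nodup_of_reach (hT y x)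
  have hinc : ∀ w, (∃ g ∈ {g | g ∈ e :: es}, w ∈ ends g) → w ∈ vs := by
    rintro w ⟨g, hg, hwg⟩
    rcases List.mem_cons.mp hg with rfl | hg
    · rw [hxy, Sym2.mem_iff] at hwg
      rcases hwg with rfl | rfl
      exacts [hw.end_mem, hw.start_mem]
    · exact hw.mem_of_mem_ends hg hwg
  have hnd' : (e :: es).Nodup :=
    List.nodup_cons.mpr ⟨fun h => heT (hw.mem_of_mem_edges h), hw.edges_nodup hnd⟩
  refine ⟨{g | g ∈ e :: es}, ?_, List.mem_cons_self, ⟨e, List.mem_cons_self⟩, ?_, ?_⟩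
  · intro g hg
    rcases List.mem_cons.mp hg with rfl | hg
    exacts [Set.mem_insert _ _, Set.mem_insert_of_mem _ (hw.mem_of_mem_edges hg)]
  · intro a b ha hb
    exact Reach.mono (fun _ => List.mem_cons_of_mem _)
      ((hw.reach (hinc a ha)).symm.trans (hw.reach (hinc b hb)))
  · intro w hw'
    have hpath := hw.countP_add_ite_add_ite hnd w
    simp only [Set.mem_ofPred_eq]
    rw [List.natCard_setOf_mem_and hnd', List.countP_cons]
    by_cases hwx : w = x <;> by_cases hwy : w = y <;> simp_all

theorem Conn.not_isEdgeCut [Nonempty V] {D : Set E} (h : Conn ends Dᶜ) : ¬IsEdgeCut ends D := by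
  rw [IsEdgeCut, h.numComp_eq_one, (h.mono (Set.subset_univ _)).numComp_eq_one]
  exact lt_irrefl 1

theorem isEdgeCut_star [Finite V] [Nontrivial V] (hconn : Conn ends Set.univ) (v : V) :
    IsEdgeCut ends {g | v ∈ ends g} := by
  rw [IsEdgeCut, hconn.numComp_eq_one, numComp, Finite.one_lt_card_iff_nontrivial]
  obtain ⟨u, hu⟩ := exists_ne v
  refine ⟨Quot.mk _ v, Quot.mk _ u, fun hvu => hu ?_⟩
  have hreach : Reach ends {g | v ∈ ends g}ᶜ v u :=
    reach_equivalence.eqvGen_iff.mp (Quot.eq.mp hvu)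
  exact hreach.eq_of_forall_not_mem fun _ hg => hg

theorem IsCycle.exists_setOf_mem_and_eq_pair {C : Set E} {e : E} {v : V} (hC : IsCycle ends C)
    (he : e ∈ C) (hv : v ∈ ends e) :
    ∃ f ∈ C, f ≠ e ∧ {g | g ∈ C ∧ v ∈ ends g} = {e, f} := by
  have hcard := hC.2.2 v ⟨e, he, hv⟩
  rw [Nat.card_coe_set_eq, Set.ncard_eq_two] at hcard
  obtain ⟨a, b, hab, hset⟩ := hcard
  have hmem : ∀ g ∈ ({a, b} : Set E), g ∈ C := by
    rw [← hset]
    exact fun g hg => hg.1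
  have heab : e ∈ ({a, b} : Set E) := hset ▸ ⟨he, hv⟩
  rcases heab with rfl | rfl
  · exact ⟨b, hmem b (by simp), hab.symm, hset⟩
  · exact ⟨a, hmem a (by simp), hab, hset.trans (Set.pair_comm _ _)⟩

def IsLeafEdge (ends : E → Sym2 V) (S : Set E) (v : V) (e : E) : Prop :=
  e ∈ S ∧ v ∈ ends e ∧ ∀ g ∈ S, v ∈ ends g → g = e

def leafEdges (ends : E → Sym2 V) (S : Set E) : Set E :=
  {e | ∃ v, IsLeafEdge ends S v e}

namespace IsLeafEdge

variable {S : Set E} {v : V} {e : E}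

/-- A walk of `S` through the leaf `v` can be redirected to the neighbour `x` of `v`. -/
theorem reach_redirect [DecidableEq V] (h : IsLeafEdge ends S v e) {x : V}
    (hx : ends e = s(v, x)) (hxv : x ≠ v) {u w : V} (huw : Reach ends S u w) :
    Reach ends {g | g ∈ S ∧ v ∉ ends g} (if u = v then x else u) (if w = v then x else w) := by
  induction huw with
  | refl => exact .refl
  | @tail b c _ hadj ih =>
    obtain ⟨g, hg, hgends⟩ := hadj
    by_cases hvg : v ∈ ends g
    · obtain rfl := h.2.2 g hg hvg
      rw [hx] at hgends
      rcases Sym2.eq_iff.mp hgends with ⟨rfl, rfl⟩ | ⟨rfl, rfl⟩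
      · simpa [hxv] using ih
      · simpa [hxv] using ih
    · have hbv : b ≠ v := by rintro rfl; exact hvg (hgends ▸ Sym2.mem_mk_left _ _)
      have hcv : c ≠ v := by rintro rfl; exact hvg (hgends ▸ Sym2.mem_mk_right _ _)
      rw [if_neg hbv] at ih
      rw [if_neg hcv]
      exact ih.tail ⟨g, ⟨hg, hvg⟩, hgends⟩

theorem isMinEdgeCut_star [Finite V] [Nontrivial V] (hloop : ∀ g, ¬(ends g).IsDiag)
    (hS : Conn ends S) (h : IsLeafEdge ends S v e) : IsMinEdgeCut ends {g | v ∈ ends g} := by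
  classical
  refine ⟨isEdgeCut_star (hS.mono (Set.subset_univ S)) v, fun D' hD' hcut => ?_⟩
  obtain ⟨f, hfv, hfD'⟩ := Set.exists_of_ssubset hD'
  have hy := Sym2.other_ne (hloop f) hfv
  have hx := Sym2.other_ne (hloop e) h.2.1
  suffices hy_reach : ∀ u, Reach ends D'ᶜ u (Sym2.Mem.other hfv) from
    Conn.not_isEdgeCut (fun a b => (hy_reach a).trans (hy_reach b).symm) hcut
  intro u
  by_cases huv : u = v
  · subst huv
    exact .single ⟨f, hfD', (Sym2.other_spec hfv).symm⟩
  · have := h.reach_redirect (Sym2.other_spec h.2.1).symm hx (hS u (Sym2.Mem.other hfv))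
    rw [if_neg huv, if_neg hy] at this
    exact this.mono fun g hg hgD' => hg.2 (hD'.1 hgD')

theorem isFundCut [Finite V] [Nontrivial V] (hloop : ∀ g, ¬(ends g).IsDiag)
    (hS : Conn ends S) (h : IsLeafEdge ends S v e) : IsFundCut ends S e {g | v ∈ ends g} := by
  refine ⟨fun g hvg => ?_, h.2.1, h.isMinEdgeCut_star hloop hS⟩
  by_cases hg : g ∈ S
  · exact h.2.2 g hg hvg ▸ Set.mem_insert _ _
  · exact Set.mem_insert_of_mem _ hg

theorem exists_exchange [Finite V] [Nontrivial V] (hloop : ∀ g, ¬(ends g).IsDiag) {T : Set E}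
    (hd : Disjoint S T) (hS : Conn ends S) (hT : Conn ends T) (h : IsLeafEdge ends S v e) :
    ∃ f ∈ T, ∃ D C : Set E, IsFundCut ends S e D ∧ IsFundCycle ends T e C ∧ D ∩ C = {e, f} := by
  obtain ⟨C, hCT, heC, hC⟩ := exists_isFundCycle hT (hloop e) (Set.disjoint_left.mp hd h.1)
  obtain ⟨f, hfC, hfe, hpair⟩ := hC.exists_setOf_mem_and_eq_pair heC h.2.1
  refine ⟨f, (Set.mem_insert_iff.mp (hCT hfC)).resolve_left hfe, _, C, h.isFundCut hloop hS,
    ⟨hCT, heC, hC⟩, ?_⟩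
  rw [← hpair, Set.inter_comm]
  rfl

end IsLeafEdge

theorem _root_.Finset.two_mul_card_le_sum_add_card_filter_eq_one {ι : Type*} (s : Finset ι)
    (f : ι → ℕ) (hf : ∀ i ∈ s, 1 ≤ f i) :
    2 * s.card ≤ ∑ i ∈ s, f i + (s.filter (f · = 1)).card := by
  rw [Finset.card_filter, ← Finset.sum_add_distrib, mul_comm, ← smul_eq_mul, ← Finset.sum_const]
  refine Finset.sum_le_sum fun i hi => ?_
  have := hf i hi
  split_ifs <;> omega

theorem sum_card_filter_mem_ends [Fintype V] [DecidableEq V] (hloop : ∀ g, ¬(ends g).IsDiag)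
    (F : Finset E) : ∑ v, (F.filter (v ∈ ends ·)).card = 2 * F.card := by
  have := Finset.sum_card_bipartiteAbove_eq_sum_card_bipartiteBelow (fun v g => v ∈ ends g)
    (s := Finset.univ) (t := F)
  simp only [Finset.bipartiteAbove, Finset.bipartiteBelow] at this
  rw [this, mul_comm, ← smul_eq_mul, ← Finset.sum_const]
  refine Finset.sum_congr rfl fun g _ => ?_
  rw [← Sym2.card_toFinset_of_not_isDiag _ (hloop g)]
  congr 1
  ext v
  simp

theorem Conn.exists_mem_ends [Nontrivial V] {S : Set E} (h : Conn ends S) (v : V) :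
    ∃ g ∈ S, v ∈ ends g := by
  obtain ⟨u, hu⟩ := exists_ne v
  rcases (h v u).cases_head with rfl | ⟨_, ⟨g, hg, hends⟩, _⟩
  · exact absurd rfl hu
  · exact ⟨g, hg, hends ▸ Sym2.mem_mk_left _ _⟩

theorem exists_isLeafEdge_of_card_eq_one [Fintype E] [DecidableEq V] {S : Set E}
    [DecidablePred (· ∈ S)] {v : V} (h : (S.toFinset.filter (v ∈ ends ·)).card = 1) : ∃ e, IsLeafEdge ends S v e := by
  obtain ⟨e, he⟩ := Finset.card_eq_one.mp h
  have hmem : ∀ g, g ∈ S ∧ v ∈ ends g ↔ g = e := fun g => by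
    simpa using Finset.ext_iff.mp he g
  exact ⟨e, ((hmem e).mpr rfl).1, ((hmem e).mpr rfl).2, fun g hg hvg => (hmem g).mp ⟨hg, hvg⟩⟩

/-- Degrees sum to `2 (|V| - 1)` and are all positive, so at least two of them equal `1`. -/
theorem IsSpanningTree.exists_two_isLeafEdge [Finite V] [Finite E] [Nontrivial V]
    (hloop : ∀ g, ¬(ends g).IsDiag) {S : Set E} (hS : IsSpanningTree ends S) :
    ∃ v₁ v₂ e₁ e₂, v₁ ≠ v₂ ∧ IsLeafEdge ends S v₁ e₁ ∧ IsLeafEdge ends S v₂ e₂ := by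
  classical
  have := Fintype.ofFinite V
  have := Fintype.ofFinite E
  have hsum := sum_card_filter_mem_ends hloop S.toFinset
  have hcard : S.toFinset.card = Nat.card V - 1 := by
    rw [← Set.ncard_eq_toFinset_card', ← Nat.card_coe_set_eq, hS.2]
  have hleaves := Finset.univ.two_mul_card_le_sum_add_card_filter_eq_one
    (fun v => (S.toFinset.filter (v ∈ ends ·)).card) fun v _ =>
    Finset.card_pos.mpr <| let ⟨g, hg, hvg⟩ := hS.1.exists_mem_ends v; ⟨g, by simp [hg, hvg]⟩
  rw [hsum, hcard, Finset.card_univ, ← Nat.card_eq_fintype_card] at hleaves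
  have hV := Finite.one_lt_card (α := V)
  obtain ⟨v₁, hv₁, v₂, hv₂, hne⟩ := Finset.one_lt_card.mp (by omega : 1 < (Finset.univ.filter
    fun v => (S.toFinset.filter (v ∈ ends ·)).card = 1).card)
  obtain ⟨e₁, he₁⟩ := exists_isLeafEdge_of_card_eq_one (Finset.mem_filter.mp hv₁).2
  obtain ⟨e₂, he₂⟩ := exists_isLeafEdge_of_card_eq_one (Finset.mem_filter.mp hv₂).2
  exact ⟨v₁, v₂, e₁, e₂, hne, he₁, he₂⟩

theorem IsLeafEdge.eq_or_eq_of_reach {S : Set E} {v₁ v₂ z : V} {e : E}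
    (h₁ : IsLeafEdge ends S v₁ e) (h₂ : IsLeafEdge ends S v₂ e) (hne : v₁ ≠ v₂)
    (hz : Reach ends S v₁ z) : z = v₁ ∨ z = v₂ := by
  have hends : ends e = s(v₁, v₂) := (Sym2.mem_and_mem_iff hne).mp ⟨h₁.2.1, h₂.2.1⟩
  induction hz with
  | refl => exact Or.inl rfl
  | @tail b c _ hadj ih =>
    obtain ⟨g, hg, hgends⟩ := hadj
    have hge : g = e := by
      rcases ih with rfl | rfl
      exacts [h₁.2.2 g hg (hgends ▸ Sym2.mem_mk_left _ _),
        h₂.2.2 g hg (hgends ▸ Sym2.mem_mk_left _ _)]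
    rw [hge, hends] at hgends
    rcases Sym2.eq_iff.mp hgends with ⟨-, hc⟩ | ⟨hc, -⟩
    exacts [Or.inr hc.symm, Or.inl hc.symm]

theorem IsSpanningTree.two_le_ncard_leafEdges [Finite V] [Finite E]
    (hloop : ∀ g, ¬(ends g).IsDiag) {S : Set E} (hS : IsSpanningTree ends S)
    (hV : 3 ≤ Nat.card V) : 2 ≤ (leafEdges ends S).ncard := by
  have : Nontrivial V := Finite.one_lt_card_iff_nontrivial.mp (by omega)
  obtain ⟨v₁, v₂, e₁, e₂, hne, h₁, h₂⟩ := hS.exists_two_isLeafEdge hloop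
  have he : e₁ ≠ e₂ := by
    rintro rfl
    obtain ⟨z, hz₁, hz₂⟩ :=
      Cardinal.exists_ne_ne_of_three_le (by rw [← Nat.cast_card]; exact_mod_cast hV) v₁ v₂
    exact (h₁.eq_or_eq_of_reach h₂ hne (hS.1 v₁ z)).elim hz₁ hz₂
  rw [← Set.ncard_pair he]
  exact Set.ncard_le_ncard (Set.pair_subset ⟨v₁, h₁⟩ ⟨v₂, h₂⟩)

end MG

theorem four_unique_exchanges_general {V E : Type*} [Finite V] [Finite E]
    (ends : E → Sym2 V) (hloop : ∀ e : E, ¬ (ends e).IsDiag)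
    (S T : Set E) (hd : Disjoint S T)
    (hS : MG.IsSpanningTree ends S) (hT : MG.IsSpanningTree ends T)
    (hV : 3 ≤ Nat.card V) :
    4 ≤ Nat.card {p : E × E |
      (p.1 ∈ S ∧ p.2 ∈ T ∧ ∃ D C : Set E, MG.IsFundCut ends S p.1 D ∧
        MG.IsFundCycle ends T p.1 C ∧ D ∩ C = {p.1, p.2}) ∨
      (p.1 ∈ T ∧ p.2 ∈ S ∧ ∃ D C : Set E, MG.IsFundCut ends T p.1 D ∧
        MG.IsFundCycle ends S p.1 C ∧ D ∩ C = {p.1, p.2})} := by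
  have : Nontrivial V := Finite.one_lt_card_iff_nontrivial.mp (by omega)
  set P := {p : E × E | _ ∨ _}
  have hleaves_fst : MG.leafEdges ends S ∪ MG.leafEdges ends T ⊆ Prod.fst '' P := by
    rintro e (⟨_, he⟩ | ⟨_, he⟩)
    · obtain ⟨f, hf, hex⟩ := he.exists_exchange hloop hd hS.1 hT.1
      exact ⟨(e, f), Or.inl ⟨he.1, hf, hex⟩, rfl⟩
    · obtain ⟨f, hf, hex⟩ := he.exists_exchange hloop hd.symm hT.1 hS.1
      exact ⟨(e, f), Or.inr ⟨he.1, hf, hex⟩, rfl⟩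
  have hdisj : Disjoint (MG.leafEdges ends S) (MG.leafEdges ends T) :=
    hd.mono (fun _ ⟨_, he⟩ => he.1) (fun _ ⟨_, he⟩ => he.1)
  rw [Nat.card_coe_set_eq]
  calc 4 ≤ (MG.leafEdges ends S).ncard + (MG.leafEdges ends T).ncard := by
        linarith [hS.two_le_ncard_leafEdges hloop hV, hT.two_le_ncard_leafEdges hloop hV]
    _ = (MG.leafEdges ends S ∪ MG.leafEdges ends T).ncard := (Set.ncard_union_eq hdisj).symm
    _ ≤ (Prod.fst '' P).ncard := Set.ncard_le_ncard hleaves_fst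
    _ ≤ P.ncard := Set.ncard_image_le

/-- In a bispanning graph with at least three vertices, each pair of disjoint spanning
trees admits at least four unique symmetric edge exchanges: the unique exchange graph
has minimum degree at least `4`. -/
theorem four_unique_exchanges {V E : Type*} [Finite V] [Finite E]
    (ends : E → Sym2 V) (hloop : ∀ e : E, ¬ (ends e).IsDiag)
    (S T : Set E) (hU : S ∪ T = Set.univ) (hd : Disjoint S T)
    (hS : MG.IsSpanningTree ends S) (hT : MG.IsSpanningTree ends T)
    (hV : 3 ≤ Nat.card V) :
    4 ≤ Nat.card {p : E × E |
      (p.1 ∈ S ∧ p.2 ∈ T ∧ ∃ D C : Set E, MG.IsFundCut ends S p.1 D ∧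
        MG.IsFundCycle ends T p.1 C ∧ D ∩ C = {p.1, p.2}) ∨
      (p.1 ∈ T ∧ p.2 ∈ S ∧ ∃ D C : Set E, MG.IsFundCut ends T p.1 D ∧
        MG.IsFundCycle ends S p.1 C ∧ D ∩ C = {p.1, p.2})} :=
  four_unique_exchanges_general ends hloop S T hd hS hT hV
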